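/- Let X and Y be finitely supported random variables on G = 𝔽₂ⁿ, and let X₁, X₂, Y₁, Y₂ be mutually independent copies of X, X, Y, Y respectively. Set S = X₁ + X₂ + Y₁ + Y₂. Then s[X₁ + X₂; Y₁ + Y₂] + s[X₁ | X₁ + X₂; Y₁ | Y₁ + Y₂] = 2 s[X; Y] + I[(X₁ + Y₁, X₂ + Y₂) : (X₁ + X₂, Y₁ + Y₂) | S]. -/
import Mathlib


open Real Pointwise

noncomputable section

abbrev Fvec (n : ℕ) : Type := Fin n → ZMod 2

/-- Shannon entropy (natural log) of a finitely supported distribution. -/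
def ent {A : Type*} (p : A → ℝ) : ℝ := ∑ᶠ a, Real.negMulLog (p a)

/-- `p` is a (finitely supported) probability distribution. -/
def IsDist {A : Type*} (p : A → ℝ) : Prop := (∀ a, 0 ≤ p a) ∧ ∑ᶠ a, p a = 1

/-- Pushforward of a distribution along a map: the distribution of `f(X)` for `X ∼ p`. -/
def push {A B : Type*} (f : A → B) (p : A → ℝ) : B → ℝ := fun b => ∑ᶠ a ∈ f ⁻¹' {b}, p a

/-- Joint distribution of a pair of independent random variables. -/
def prodDist {A B : Type*} (p : A → ℝ) (q : B → ℝ) : A × B → ℝ := fun z => p z.1 * q z.2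

/-- Distribution of `X + Y` for independent `X ∼ p`, `Y ∼ q`. -/
def conv {A : Type*} [AddGroup A] (p q : A → ℝ) : A → ℝ := fun z => ∑ᶠ x, p x * q (z - x)

/-- The distribution of `X` conditioned on `U = b`, where `r` is the joint distribution of `(X, U)`. -/
def fiber {A B : Type*} (r : A × B → ℝ) (b : B) : A → ℝ := fun a => r (a, b) / push Prod.snd r b

/-- Conditional entropy `H[X | U]` of a joint distribution `r` of `(X, U)`. -/
def condEnt {A B : Type*} (r : A × B → ℝ) : ℝ := ∑ᶠ b, push Prod.snd r b * ent (fiber r b)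

/-- Doubling mass `s[X ; Y]` (of independent copies with distributions `p`, `q`). -/
def sDouble {A : Type*} [AddGroup A] (p q : A → ℝ) : ℝ := ent p + ent q - ent (conv p q)

/-- Conditional doubling mass `s[X | U ; Y | W] = 𝔼_{u ∼ U, w ∼ W} s[X_u ; Y_w]`,
where `r1`, `r2` are the joint distributions of `(X, U)` and `(Y, W)`. -/
def sCond {A U W : Type*} [AddGroup A] (r1 : A × U → ℝ) (r2 : A × W → ℝ) : ℝ :=
  ∑ᶠ u, ∑ᶠ w, push Prod.snd r1 u * push Prod.snd r2 w * sDouble (fiber r1 u) (fiber r2 w)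

/-- Conditional mutual information `I[A : B | S]` of a joint distribution of `(A, B, S)`. -/
def condMI {A B S : Type*} (r : A × B × S → ℝ) : ℝ :=
  ent (push (fun z => (z.1, z.2.2)) r) + ent (push (fun z => z.2) r)
    - ent r - ent (push (fun z => z.2.2) r)

/-- Uniform distribution on a set. -/
def unifOn {A : Type*} (s : Set A) : A → ℝ := s.indicator fun _ => (Nat.card s : ℝ)⁻¹

/-- Entropic Ruzsa distance `d[X ; Y]`. -/
def dRuzsa {A : Type*} [AddGroup A] (p q : A → ℝ) : ℝ := ent (conv p q) - ent p / 2 - ent q / 2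

/-- Joint distribution of `(X, X + Y)` for independent `X ∼ p`, `Y ∼ q`. -/
def jointSum {A : Type*} [AddGroup A] (p q : A → ℝ) : A × A → ℝ :=
  push (fun z : A × A => (z.1, z.1 + z.2)) (prodDist p q)

/-- Joint distribution of `(X, π_V(X))`. -/
def selfProj {n : ℕ} (V : Submodule (ZMod 2) (Fvec n)) (p : Fvec n → ℝ) :
    Fvec n × (Fvec n ⧸ V) → ℝ := push (fun x => (x, V.mkQ x)) p

/-- Joint distribution of independent `(X₁, X₂, Y₁, Y₂)` with `X₁, X₂ ∼ p` and `Y₁, Y₂ ∼ q`. -/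
def quad {A : Type*} (p q : A → ℝ) : A × A × A × A → ℝ :=
  fun z => p z.1 * p z.2.1 * q z.2.2.1 * q z.2.2.2

/-- Distribution of `X₁ + ⋯ + X_k` for independent `Xᵢ ∼ p i`. -/
def indepSum {A : Type*} [AddCommGroup A] (k : ℕ) (p : Fin k → A → ℝ) : A → ℝ :=
  push (fun x : Fin k → A => ∑ i, x i) (fun x => ∏ i, p i (x i))

/-- Statement `A(η, L, c)` from the paper. -/
def StA (η L c : ℝ) : Prop :=
  ∀ (n : ℕ) (p q : Fvec n → ℝ), IsDist p → IsDist q →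
    ent (conv p q) ≤ (1 - η) * (ent p + ent q) →
    ∃ V : Submodule (ZMod 2) (Fvec n),
      ent (unifOn (V : Set (Fvec n))) ≤ L * (ent p + ent q) ∧
      ent (push V.mkQ p) + ent (push V.mkQ q) ≤ (1 - c) * (ent p + ent q)

/-- Statement `B(η, ε, L)` from the paper. -/
def StB (η ε L : ℝ) : Prop :=
  ∀ (n : ℕ) (p q : Fvec n → ℝ), IsDist p → IsDist q →
    ∃ V : Submodule (ZMod 2) (Fvec n),
      ent (unifOn (V : Set (Fvec n))) ≤ L * (ent p + ent q) ∧
      ent (conv (push V.mkQ p) (push V.mkQ q)) ≥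
        (1 - η) * (ent (push V.mkQ p) + ent (push V.mkQ q)) - ε * (ent p + ent q)


set_option linter.unusedSectionVars false

section Aux

variable {A B C D : Type*} [Fintype A] [Fintype B] [Fintype C] [Fintype D]
  [DecidableEq A] [DecidableEq B] [DecidableEq C] [DecidableEq D]

lemma ent_eq (p : A → ℝ) : ent p = ∑ a, Real.negMulLog (p a) :=
  finsum_eq_sum_of_fintype _

lemma push_apply (f : A → B) (p : A → ℝ) (b : B) :
    push f p b = ∑ a, if f a = b then p a else 0 := by
  rw [push, finsum_mem_def, finsum_eq_sum_of_fintype]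
  refine Finset.sum_congr rfl fun a _ => ?_
  by_cases h : f a = b <;> simp [Set.indicator_apply, h]

lemma sum_push (f : A → B) (p : A → ℝ) : ∑ b, push f p b = ∑ a, p a := by
  simp only [push_apply]
  rw [Finset.sum_comm]
  simp

lemma push_nonneg (f : A → B) (p : A → ℝ) (hp : ∀ a, 0 ≤ p a) (b : B) :
    0 ≤ push f p b := by
  rw [push_apply]
  exact Finset.sum_nonneg fun a _ => by by_cases h : f a = b <;> simp [h, hp a]

lemma push_comp (f : A → B) (g : B → C) (p : A → ℝ) :
    push g (push f p) = push (fun a => g (f a)) p := by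
  funext c
  simp only [push_apply]
  calc ∑ b, (if g b = c then ∑ a, if f a = b then p a else 0 else 0)
      = ∑ b, ∑ a, (if g b = c then if f a = b then p a else 0 else 0) := by
        refine Finset.sum_congr rfl fun b _ => ?_
        split_ifs with h
        · rfl
        · simp
    _ = ∑ a, ∑ b, (if g b = c then if f a = b then p a else 0 else 0) := Finset.sum_comm
    _ = ∑ a, if g (f a) = c then p a else 0 := by
        refine Finset.sum_congr rfl fun a _ => ?_
        have h : ∀ b : B, (if g b = c then if f a = b then p a else 0 else 0)
            = if b = f a then (if g b = c then p a else 0) else 0 := by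
          intro b
          by_cases hb : f a = b
          · subst hb; simp
          · simp [hb, Ne.symm hb]
        simp only [h, Finset.sum_ite_eq', Finset.mem_univ, if_true]

lemma push_equiv (e : A ≃ B) (p : A → ℝ) (b : B) : push (⇑e) p b = p (e.symm b) := by
  rw [push_apply]
  have h : ∀ a : A, (if e a = b then p a else 0) = if a = e.symm b then p a else 0 := by
    intro a
    congr 1
    simp [Equiv.eq_symm_apply, eq_comm]
  simp only [h, Finset.sum_ite_eq', Finset.mem_univ, if_true]

lemma ent_push_inj (f : A → B) (hf : Function.Injective f) (p : A → ℝ) :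
    ent (push f p) = ent p := by
  rw [ent_eq, ent_eq]
  have h1 : ∀ a : A, push f p (f a) = p a := by
    intro a
    rw [push_apply]
    have h : ∀ a' : A, (if f a' = f a then p a' else 0) = if a' = a then p a' else 0 := by
      intro a'; congr 1; simp [hf.eq_iff]
    simp only [h, Finset.sum_ite_eq', Finset.mem_univ, if_true]
  have h2 := Finset.sum_image (s := Finset.univ) (g := f)
    (f := fun b => Real.negMulLog (push f p b)) (fun a _ a' _ h => hf h)
  calc ∑ b : B, Real.negMulLog (push f p b)
      = ∑ b ∈ Finset.univ.image f, Real.negMulLog (push f p b) := by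
        refine (Finset.sum_subset (Finset.subset_univ _) ?_).symm
        intro b _ hb
        have hz : push f p b = 0 := by
          rw [push_apply]
          refine Finset.sum_eq_zero fun a _ => ?_
          have : f a ≠ b := fun h => hb (Finset.mem_image.2 ⟨a, Finset.mem_univ a, h⟩)
          simp [this]
        simp [hz]
    _ = ∑ a : A, Real.negMulLog (push f p (f a)) := h2
    _ = ∑ a : A, Real.negMulLog (p a) := by
        exact Finset.sum_congr rfl fun a _ => by rw [h1]

end Aux

section Aux2

variable {A B C D : Type*} [Fintype A] [Fintype B] [Fintype C] [Fintype D]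
  [DecidableEq A] [DecidableEq B] [DecidableEq C] [DecidableEq D]

lemma prodDist_push (f : A → B) (g : C → D) (p : A → ℝ) (q : C → ℝ) :
    prodDist (push f p) (push g q) = push (Prod.map f g) (prodDist p q) := by
  funext z
  obtain ⟨b, d⟩ := z
  simp only [prodDist, push_apply, Fintype.sum_prod_type]
  rw [Finset.sum_mul_sum]
  refine Finset.sum_congr rfl fun a _ => Finset.sum_congr rfl fun c _ => ?_
  simp only [Prod.map, Prod.mk.injEq]
  split_ifs with h1 h2 h3 h4 <;> simp_all

lemma conv_push [AddCommGroup A] (p q : A → ℝ) :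
    conv p q = push (fun z : A × A => z.1 + z.2) (prodDist p q) := by
  funext z
  rw [conv, finsum_eq_sum_of_fintype, push_apply, Fintype.sum_prod_type]
  refine Finset.sum_congr rfl fun x _ => ?_
  have h : ∀ y : A, (if (x, y).1 + (x, y).2 = z then prodDist p q (x, y) else 0)
      = if y = z - x then p x * q y else 0 := by
    intro y
    have hiff : x + y = z ↔ y = z - x := by
      constructor
      · intro h; rw [← h]; abel
      · intro h; rw [h]; abel
    simp only [prodDist]
    rw [if_congr hiff rfl rfl]
  simp only [h, Finset.sum_ite_eq', Finset.mem_univ, if_true]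

end Aux2

section Aux3

variable {A B : Type*} [Fintype A] [Fintype B] [DecidableEq A] [DecidableEq B]

lemma sum_prodDist (p : A → ℝ) (q : B → ℝ) :
    ∑ z : A × B, prodDist p q z = (∑ a, p a) * (∑ b, q b) := by
  rw [Fintype.sum_prod_type, Finset.sum_mul_sum]
  rfl

lemma ent_prodDist (p : A → ℝ) (q : B → ℝ)
    (hp : ∑ a, p a = 1) (hq : ∑ b, q b = 1) :
    ent (prodDist p q) = ent p + ent q := by
  simp only [ent_eq, Fintype.sum_prod_type, prodDist]
  have h : ∀ (a : A) (b : B), Real.negMulLog (p a * q b)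
      = q b * Real.negMulLog (p a) + p a * Real.negMulLog (q b) := by
    intro a b
    rw [Real.negMulLog_mul]
  simp only [h, Finset.sum_add_distrib, ← Finset.sum_mul, ← Finset.mul_sum]
  rw [hq, hp]
  ring

lemma push_snd_apply (r : A × B → ℝ) (b : B) :
    push Prod.snd r b = ∑ a, r (a, b) := by
  rw [push_apply, Fintype.sum_prod_type]
  refine Finset.sum_congr rfl fun a _ => ?_
  simp [Finset.sum_ite_eq']

lemma fiber_mass (r : A × B → ℝ) (hr : ∀ z, 0 ≤ r z) (b : B) (a : A) :
    push Prod.snd r b * fiber r b a = r (a, b) := by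
  by_cases h : push Prod.snd r b = 0
  · rw [h, zero_mul]
    rw [push_snd_apply] at h
    have := (Finset.sum_eq_zero_iff_of_nonneg (fun a _ => hr (a, b))).1 h a (Finset.mem_univ a)
    exact this.symm
  · rw [fiber, mul_comm, div_mul_cancel₀ _ h]

lemma ent_chain (r : A × B → ℝ) (hr : ∀ z, 0 ≤ r z) :
    ent r = ent (push Prod.snd r) + ∑ b, push Prod.snd r b * ent (fiber r b) := by
  have key : ∀ b : B, ∑ a, Real.negMulLog (r (a, b))
      = push Prod.snd r b * ent (fiber r b) + Real.negMulLog (push Prod.snd r b) := by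
    intro b
    by_cases h : push Prod.snd r b = 0
    · have hz : ∀ a, r (a, b) = 0 := by
        intro a
        have := fiber_mass r hr b a
        rw [h, zero_mul] at this
        exact this.symm
      simp [hz, h]
    · have hfib : ∀ a, r (a, b) = push Prod.snd r b * fiber r b a :=
        fun a => (fiber_mass r hr b a).symm
      have hsum1 : ∑ a, fiber r b a = 1 := by
        have : ∑ a, fiber r b a = (∑ a, r (a, b)) / push Prod.snd r b := by
          rw [Finset.sum_div]
          rfl
        rw [this, ← push_snd_apply, div_self h]
      calc ∑ a, Real.negMulLog (r (a, b))
          = ∑ a, (push Prod.snd r b * Real.negMulLog (fiber r b a)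
              + fiber r b a * Real.negMulLog (push Prod.snd r b)) := by
            refine Finset.sum_congr rfl fun a _ => ?_
            rw [hfib a, Real.negMulLog_mul]
            ring
        _ = push Prod.snd r b * ent (fiber r b) + Real.negMulLog (push Prod.snd r b) := by
            rw [Finset.sum_add_distrib, ← Finset.mul_sum, ← Finset.sum_mul, hsum1, one_mul,
              ent_eq]
  calc ent r = ∑ b, ∑ a, Real.negMulLog (r (a, b)) := by
        rw [ent_eq, Fintype.sum_prod_type, Finset.sum_comm]
    _ = ∑ b, (push Prod.snd r b * ent (fiber r b) + Real.negMulLog (push Prod.snd r b)) :=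
        Finset.sum_congr rfl fun b _ => key b
    _ = ent (push Prod.snd r) + ∑ b, push Prod.snd r b * ent (fiber r b) := by
        rw [Finset.sum_add_distrib, ent_eq]
        ring

end Aux3

section Aux4

variable {A B C : Type*} [Fintype A] [Fintype B] [Fintype C]
  [DecidableEq A] [DecidableEq B] [DecidableEq C]

lemma push_chi [AddCommGroup A] (s1 : A × B → ℝ) (s2 : A × C → ℝ) (a : A) (u : B) (w : C) :
    push (fun z : (A × B) × (A × C) => (z.1.1 + z.2.1, (z.1.2, z.2.2)))
      (prodDist s1 s2) (a, (u, w)) = ∑ x, s1 (x, u) * s2 (a - x, w) := by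
  rw [push_apply, Fintype.sum_prod_type]
  have h1 : ∀ (z1 : A × B) (z2 : A × C),
      (if (z1.1 + z2.1, (z1.2, z2.2)) = (a, (u, w)) then prodDist s1 s2 (z1, z2) else 0)
      = if z2 = (a - z1.1, w) then (if z1.2 = u then s1 z1 * s2 z2 else 0) else 0 := by
    intro z1 z2
    have hiff : (z1.1 + z2.1, (z1.2, z2.2)) = (a, (u, w))
        ↔ (z2 = (a - z1.1, w) ∧ z1.2 = u) := by
      simp only [Prod.ext_iff, eq_sub_iff_add_eq]
      constructor
      · rintro ⟨h1, h2, h3⟩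
        exact ⟨⟨by rw [← h1]; abel, h3⟩, h2⟩
      · rintro ⟨⟨h1, h3⟩, h2⟩
        exact ⟨by rw [← h1]; abel, h2, h3⟩
    rw [if_congr hiff rfl rfl]
    by_cases hz : z2 = (a - z1.1, w)
    · simp [hz, prodDist]
    · simp [hz]
  simp only [h1]
  simp only [Finset.sum_ite_eq', Finset.mem_univ, if_true]
  rw [Fintype.sum_prod_type]
  refine Finset.sum_congr rfl fun x _ => ?_
  simp [Finset.sum_ite_eq']

end Aux4

section Aux5

variable {A : Type*} [Fintype A] [DecidableEq A] [AddCommGroup A]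

lemma jointSum_def (p q : A → ℝ) :
    jointSum p q = push (fun z : A × A => (z.1, z.1 + z.2)) (prodDist p q) := rfl

lemma push_snd_jointSum (p q : A → ℝ) :
    push Prod.snd (jointSum p q) = conv p q := by
  rw [jointSum_def, push_comp]
  rw [show (fun a : A × A => Prod.snd ((fun z : A × A => (z.1, z.1 + z.2)) a))
      = (fun z : A × A => z.1 + z.2) from rfl]
  rw [← conv_push]

lemma jointSum_nonneg (p q : A → ℝ) (hp0 : ∀ a, 0 ≤ p a) (hq0 : ∀ a, 0 ≤ q a) (z : A × A) :
    0 ≤ jointSum p q z := by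
  rw [jointSum_def]
  exact push_nonneg _ _ (fun a : A × A => mul_nonneg (hp0 a.1) (hq0 a.2)) z

lemma ent_jointSum (p q : A → ℝ) (hp1 : ∑ a, p a = 1) (hq1 : ∑ a, q a = 1) :
    ent (jointSum p q) = ent p + ent q := by
  rw [jointSum_def, ent_push_inj, ent_prodDist p q hp1 hq1]
  rintro ⟨a1, a2⟩ ⟨b1, b2⟩ h
  simp only [Prod.mk.injEq] at h
  obtain ⟨h1, h2⟩ := h
  subst h1
  simp only [add_right_inj] at h2
  subst h2
  rfl

lemma sum_conv (p q : A → ℝ) : ∑ z, conv p q z = (∑ a, p a) * (∑ a, q a) := by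
  rw [conv_push, sum_push, sum_prodDist]

lemma conv_nonneg' (p q : A → ℝ) (hp0 : ∀ a, 0 ≤ p a) (hq0 : ∀ a, 0 ≤ q a) (z : A) :
    0 ≤ conv p q z := by
  rw [conv_push]
  exact push_nonneg _ _ (fun a : A × A => mul_nonneg (hp0 a.1) (hq0 a.2)) z

end Aux5

section Aux6

variable {A : Type*} [Fintype A] [DecidableEq A] [AddCommGroup A]

lemma sCond_formula (p q : A → ℝ) (hp0 : ∀ a, 0 ≤ p a) (hq0 : ∀ a, 0 ≤ q a)
    (hp1 : ∑ a, p a = 1) (hq1 : ∑ a, q a = 1) :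
    sCond (jointSum p p) (jointSum q q)
      = (ent p + ent p) + (ent q + ent q)
        - ent (push (fun z : (A × A) × (A × A) => (z.1.1 + z.2.1, (z.1.2, z.2.2)))
            (prodDist (jointSum p p) (jointSum q q))) := by
  set r1 := jointSum p p with hr1def
  set r2 := jointSum q q with hr2def
  set T := push (fun z : (A × A) × (A × A) => (z.1.1 + z.2.1, (z.1.2, z.2.2)))
      (prodDist r1 r2) with hTdef
  have h1n : ∀ z, 0 ≤ r1 z := jointSum_nonneg p p hp0 hp0
  have h2n : ∀ z, 0 ≤ r2 z := jointSum_nonneg q q hq0 hq0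
  have hm1 : push Prod.snd r1 = conv p p := push_snd_jointSum p p
  have hm2 : push Prod.snd r2 = conv q q := push_snd_jointSum q q
  have hM1 : ∑ u, push Prod.snd r1 u = 1 := by
    rw [hm1, sum_conv, hp1, mul_one]
  have hM2 : ∑ w, push Prod.snd r2 w = 1 := by
    rw [hm2, sum_conv, hq1, mul_one]
  have hTn : ∀ z, 0 ≤ T z :=
    push_nonneg _ _ (fun z : (A × A) × (A × A) => mul_nonneg (h1n z.1) (h2n z.2))
  have hT : ∀ (a : A) (u w : A),
      T ((a, (u, w)) : A × A × A)
        = push Prod.snd r1 u * push Prod.snd r2 w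
            * conv (fiber r1 u) (fiber r2 w) a := by
    intro a u w
    rw [hTdef, push_chi]
    have h : ∀ x, r1 (x, u) * r2 (a - x, w)
        = (push Prod.snd r1 u * fiber r1 u x)
            * (push Prod.snd r2 w * fiber r2 w (a - x)) := fun x => by
      rw [fiber_mass r1 h1n, fiber_mass r2 h2n]
    simp only [h]
    rw [conv, finsum_eq_sum_of_fintype, Finset.mul_sum]
    exact Finset.sum_congr rfl fun x _ => by ring
  have hsndT : push Prod.snd T = prodDist (push Prod.snd r1) (push Prod.snd r2) := by
    rw [hTdef, push_comp]
    rw [show (fun z : (A × A) × (A × A) =>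
        Prod.snd ((fun z : (A × A) × (A × A) => (z.1.1 + z.2.1, (z.1.2, z.2.2))) z))
        = Prod.map (Prod.snd : A × A → A) (Prod.snd : A × A → A) from rfl]
    rw [← prodDist_push]
  have hfibT : ∀ (u w : A), push Prod.snd T (u, w) * ent (fiber T (u, w))
      = push Prod.snd r1 u * push Prod.snd r2 w
          * ent (conv (fiber r1 u) (fiber r2 w)) := by
    intro u w
    have hb : push Prod.snd T (u, w) = push Prod.snd r1 u * push Prod.snd r2 w := by
      rw [hsndT]; rfl
    by_cases h : push Prod.snd r1 u * push Prod.snd r2 w = 0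
    · rw [hb, h, zero_mul, zero_mul]
    · rw [hb]
      congr 2
      funext a
      show T (a, (u, w)) / push Prod.snd T (u, w) = conv (fiber r1 u) (fiber r2 w) a
      rw [hb, hT a u w, mul_div_cancel_left₀ _ h]
  have hE1 : ∑ u, push Prod.snd r1 u * ent (fiber r1 u)
      = ent r1 - ent (push Prod.snd r1) := by
    have := ent_chain r1 h1n; linarith
  have hE2 : ∑ w, push Prod.snd r2 w * ent (fiber r2 w)
      = ent r2 - ent (push Prod.snd r2) := by
    have := ent_chain r2 h2n; linarith
  have hA3 : ∑ u, ∑ w, push Prod.snd r1 u * push Prod.snd r2 w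
        * ent (conv (fiber r1 u) (fiber r2 w))
      = ent T - ent (push Prod.snd T) := by
    have hc := ent_chain T hTn
    have h2 : ∑ b : A × A, push Prod.snd T b * ent (fiber T b)
        = ∑ u, ∑ w, push Prod.snd r1 u * push Prod.snd r2 w
            * ent (conv (fiber r1 u) (fiber r2 w)) := by
      rw [Fintype.sum_prod_type]
      exact Finset.sum_congr rfl fun u _ => Finset.sum_congr rfl fun w _ => hfibT u w
    linarith
  have hentsnd : ent (push Prod.snd T) = ent (conv p p) + ent (conv q q) := by
    rw [hsndT, hm1, hm2, ent_prodDist _ _ (by rw [sum_conv, hp1, mul_one])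
      (by rw [sum_conv, hq1, mul_one])]
  have hentr1 : ent r1 = ent p + ent p := ent_jointSum p p hp1 hp1
  have hentr2 : ent r2 = ent q + ent q := ent_jointSum q q hq1 hq1
  have hsplit : sCond r1 r2
      = (∑ u, push Prod.snd r1 u * ent (fiber r1 u)) * (∑ w, push Prod.snd r2 w)
        + (∑ u, push Prod.snd r1 u) * (∑ w, push Prod.snd r2 w * ent (fiber r2 w))
        - ∑ u, ∑ w, push Prod.snd r1 u * push Prod.snd r2 w
            * ent (conv (fiber r1 u) (fiber r2 w)) := by
    rw [sCond, finsum_eq_sum_of_fintype]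
    calc ∑ u, ∑ᶠ w, push Prod.snd r1 u * push Prod.snd r2 w
          * sDouble (fiber r1 u) (fiber r2 w)
        = ∑ u, ∑ w, push Prod.snd r1 u * push Prod.snd r2 w
            * sDouble (fiber r1 u) (fiber r2 w) :=
          Finset.sum_congr rfl fun u _ => finsum_eq_sum_of_fintype _
      _ = _ := by
          rw [Finset.sum_mul_sum, Finset.sum_mul_sum, ← Finset.sum_add_distrib,
            ← Finset.sum_sub_distrib]
          refine Finset.sum_congr rfl fun u _ => ?_
          rw [← Finset.sum_add_distrib, ← Finset.sum_sub_distrib]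
          refine Finset.sum_congr rfl fun w _ => ?_
          rw [sDouble]
          ring
  rw [hsplit, hE1, hE2, hA3, hM1, hM2, hentsnd, hentr1, hentr2, hm1, hm2]
  ring

end Aux6

section Aux7

variable {A : Type*} [Fintype A] [DecidableEq A] [AddCommGroup A]

lemma quad_eq (p q : A → ℝ) :
    quad p q = push (⇑(Equiv.prodAssoc A A (A × A)))
      (prodDist (prodDist p p) (prodDist q q)) := by
  funext z
  rw [push_equiv]
  show p z.1 * p z.2.1 * q z.2.2.1 * q z.2.2.2
      = p z.1 * p z.2.1 * (q z.2.2.1 * q z.2.2.2)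
  ring

lemma push_uw_quad (p q : A → ℝ) :
    push (fun z : A × A × A × A => (z.1 + z.2.1, z.2.2.1 + z.2.2.2)) (quad p q)
      = prodDist (conv p p) (conv q q) := by
  rw [quad_eq, push_comp]
  rw [show (fun a : (A × A) × (A × A) =>
      (fun z : A × A × A × A => (z.1 + z.2.1, z.2.2.1 + z.2.2.2))
        ((Equiv.prodAssoc A A (A × A)) a))
      = Prod.map (fun z : A × A => z.1 + z.2) (fun z : A × A => z.1 + z.2) from rfl]
  rw [← prodDist_push, ← conv_push, ← conv_push]

lemma push_xy_quad (p q : A → ℝ) :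
    push (fun z : A × A × A × A => (z.1 + z.2.2.1, z.2.1 + z.2.2.2)) (quad p q)
      = prodDist (conv p q) (conv p q) := by
  rw [quad_eq, push_comp]
  have hτ : push (⇑(Equiv.prodProdProdComm A A A A))
      (prodDist (prodDist p p) (prodDist q q))
      = prodDist (prodDist p q) (prodDist p q) := by
    funext z
    rw [push_equiv]
    simp only [prodDist, Equiv.prodProdProdComm_symm, Equiv.prodProdProdComm_apply]
    ring
  rw [show (fun a : (A × A) × (A × A) =>
      (fun z : A × A × A × A => (z.1 + z.2.2.1, z.2.1 + z.2.2.2))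
        ((Equiv.prodAssoc A A (A × A)) a))
      = (fun b : (A × A) × (A × A) =>
          Prod.map (fun z : A × A => z.1 + z.2) (fun z : A × A => z.1 + z.2)
            ((Equiv.prodProdProdComm A A A A) b)) from rfl]
  rw [← push_comp, hτ, ← prodDist_push, ← conv_push]

lemma push_phi_quad (p q : A → ℝ) :
    push (fun z : A × A × A × A =>
        (z.1 + z.2.2.1, (z.1 + z.2.1, z.2.2.1 + z.2.2.2))) (quad p q)
      = push (fun z : (A × A) × (A × A) => (z.1.1 + z.2.1, (z.1.2, z.2.2)))
          (prodDist (jointSum p p) (jointSum q q)) := by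
  rw [quad_eq, push_comp]
  have step : push (fun z : (A × A) × (A × A) => (z.1.1 + z.2.1, (z.1.2, z.2.2)))
      (push (Prod.map (fun z : A × A => (z.1, z.1 + z.2))
        (fun z : A × A => (z.1, z.1 + z.2))) (prodDist (prodDist p p) (prodDist q q)))
      = push (fun a : (A × A) × (A × A) =>
          (fun z : A × A × A × A => (z.1 + z.2.2.1, (z.1 + z.2.1, z.2.2.1 + z.2.2.2)))
            ((Equiv.prodAssoc A A (A × A)) a)) (prodDist (prodDist p p) (prodDist q q)) :=
    push_comp _ _ _
  rw [← step, ← prodDist_push]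
  rfl

end Aux7


/-- With `X₁, X₂, Y₁, Y₂` mutually independent copies of `X, X, Y, Y` and
`S = X₁+X₂+Y₁+Y₂`:
`s[X₁+X₂; Y₁+Y₂] + s[X₁ | X₁+X₂; Y₁ | Y₁+Y₂] = 2s[X; Y] + I[(X₁+Y₁, X₂+Y₂) : (X₁+X₂, Y₁+Y₂) | S]`. -/
theorem statement10 (n : ℕ) (p q : Fvec n → ℝ) (hp : IsDist p) (hq : IsDist q) :
    sDouble (conv p p) (conv q q) + sCond (jointSum p p) (jointSum q q) =
      2 * sDouble p q +
        condMI (push (fun z : Fvec n × Fvec n × Fvec n × Fvec n =>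
          ((z.1 + z.2.2.1, z.2.1 + z.2.2.2),
            ((z.1 + z.2.1, z.2.2.1 + z.2.2.2), z.1 + z.2.1 + z.2.2.1 + z.2.2.2))) (quad p q)) := by
  obtain ⟨hp0, hp1'⟩ := hp
  obtain ⟨hq0, hq1'⟩ := hq
  have hp1 : ∑ a, p a = 1 := by rw [← finsum_eq_sum_of_fintype]; exact hp1'
  have hq1 : ∑ a, q a = 1 := by rw [← finsum_eq_sum_of_fintype]; exact hq1'
  have hcpp1 : ∑ a, conv p p a = 1 := by rw [sum_conv, hp1, mul_one]
  have hcqq1 : ∑ a, conv q q a = 1 := by rw [sum_conv, hq1, mul_one]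
  have hcpq1 : ∑ a, conv p q a = 1 := by rw [sum_conv, hp1, hq1, mul_one]
  set Φ := (fun z : Fvec n × Fvec n × Fvec n × Fvec n =>
      ((z.1 + z.2.2.1, z.2.1 + z.2.2.2),
        ((z.1 + z.2.1, z.2.2.1 + z.2.2.2), z.1 + z.2.1 + z.2.2.1 + z.2.2.2))) with hΦdef
  -- (c1)
  have e1 : ent (push (fun z : (Fvec n × Fvec n) × (Fvec n × Fvec n) × Fvec n =>
        (z.1, z.2.2)) (push Φ (quad p q)))
      = ent (conv p q) + ent (conv p q) := by
    have hpush1 : push (fun z : (Fvec n × Fvec n) × (Fvec n × Fvec n) × Fvec n =>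
          (z.1, z.2.2)) (push Φ (quad p q))
        = push (fun ab : Fvec n × Fvec n => (ab, ab.1 + ab.2))
            (push (fun z : Fvec n × Fvec n × Fvec n × Fvec n =>
              (z.1 + z.2.2.1, z.2.1 + z.2.2.2)) (quad p q)) := by
      rw [push_comp, push_comp]
      refine congrArg (fun f => push f (quad p q)) ?_
      funext z
      show ((z.1 + z.2.2.1, z.2.1 + z.2.2.2), z.1 + z.2.1 + z.2.2.1 + z.2.2.2)
          = ((z.1 + z.2.2.1, z.2.1 + z.2.2.2), (z.1 + z.2.2.1) + (z.2.1 + z.2.2.2))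
      exact Prod.ext_iff.2 ⟨rfl, by abel⟩
    rw [hpush1, push_xy_quad,
      ent_push_inj _ (fun a b h => congrArg Prod.fst h),
      ent_prodDist _ _ hcpq1 hcpq1]
  -- (c2)
  have e2 : ent (push (fun z : (Fvec n × Fvec n) × (Fvec n × Fvec n) × Fvec n =>
        z.2) (push Φ (quad p q)))
      = ent (conv p p) + ent (conv q q) := by
    have hpush2 : push (fun z : (Fvec n × Fvec n) × (Fvec n × Fvec n) × Fvec n =>
          z.2) (push Φ (quad p q))
        = push (fun ab : Fvec n × Fvec n => (ab, ab.1 + ab.2))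
            (push (fun z : Fvec n × Fvec n × Fvec n × Fvec n =>
              (z.1 + z.2.1, z.2.2.1 + z.2.2.2)) (quad p q)) := by
      rw [push_comp, push_comp]
      refine congrArg (fun f => push f (quad p q)) ?_
      funext z
      show ((z.1 + z.2.1, z.2.2.1 + z.2.2.2), z.1 + z.2.1 + z.2.2.1 + z.2.2.2)
          = ((z.1 + z.2.1, z.2.2.1 + z.2.2.2), (z.1 + z.2.1) + (z.2.2.1 + z.2.2.2))
      exact Prod.ext_iff.2 ⟨rfl, by abel⟩
    rw [hpush2, push_uw_quad,
      ent_push_inj _ (fun a b h => congrArg Prod.fst h),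
      ent_prodDist _ _ hcpp1 hcqq1]
  -- (c3)
  have e3 : ent (push (fun z : (Fvec n × Fvec n) × (Fvec n × Fvec n) × Fvec n =>
        z.2.2) (push Φ (quad p q)))
      = ent (conv (conv p p) (conv q q)) := by
    have hpush3 : push (fun z : (Fvec n × Fvec n) × (Fvec n × Fvec n) × Fvec n =>
          z.2.2) (push Φ (quad p q))
        = push (fun ab : Fvec n × Fvec n => ab.1 + ab.2)
            (push (fun z : Fvec n × Fvec n × Fvec n × Fvec n =>
              (z.1 + z.2.1, z.2.2.1 + z.2.2.2)) (quad p q)) := by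
      rw [push_comp, push_comp]
      refine congrArg (fun f => push f (quad p q)) ?_
      funext z
      show z.1 + z.2.1 + z.2.2.1 + z.2.2.2 = (z.1 + z.2.1) + (z.2.2.1 + z.2.2.2)
      abel
    rw [hpush3, push_uw_quad, ← conv_push]
  -- (c4)
  have e4 : ent (push Φ (quad p q))
      = ent (push (fun z : (Fvec n × Fvec n) × (Fvec n × Fvec n) =>
          (z.1.1 + z.2.1, (z.1.2, z.2.2)))
          (prodDist (jointSum p p) (jointSum q q))) := by
    have hkinj : Function.Injective (fun t : Fvec n × Fvec n × Fvec n =>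
        ((t.1, t.2.1 + t.2.2 - t.1), ((t.2.1, t.2.2), t.2.1 + t.2.2))) := by
      intro t1 t2 h
      have h1 : t1.1 = t2.1 := congrArg (fun w => w.1.1) h
      have h2 : (t1.2.1, t1.2.2) = (t2.2.1, t2.2.2) := congrArg (fun w => w.2.1) h
      have h2' : t1.2 = t2.2 := by
        rw [show t1.2 = (t1.2.1, t1.2.2) from rfl, show t2.2 = (t2.2.1, t2.2.2) from rfl, h2]
      exact Prod.ext_iff.2 ⟨h1, h2'⟩
    have hpush4 : push Φ (quad p q)
        = push (fun t : Fvec n × Fvec n × Fvec n =>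
            ((t.1, t.2.1 + t.2.2 - t.1), ((t.2.1, t.2.2), t.2.1 + t.2.2)))
            (push (fun z : Fvec n × Fvec n × Fvec n × Fvec n =>
              (z.1 + z.2.2.1, (z.1 + z.2.1, z.2.2.1 + z.2.2.2))) (quad p q)) := by
      rw [push_comp]
      refine congrArg (fun f => push f (quad p q)) ?_
      funext z
      show ((z.1 + z.2.2.1, z.2.1 + z.2.2.2),
          ((z.1 + z.2.1, z.2.2.1 + z.2.2.2), z.1 + z.2.1 + z.2.2.1 + z.2.2.2))
        = ((z.1 + z.2.2.1, (z.1 + z.2.1) + (z.2.2.1 + z.2.2.2) - (z.1 + z.2.2.1)),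
            ((z.1 + z.2.1, z.2.2.1 + z.2.2.2), (z.1 + z.2.1) + (z.2.2.1 + z.2.2.2)))
      exact Prod.ext_iff.2 ⟨Prod.ext_iff.2 ⟨rfl, by abel⟩, Prod.ext_iff.2 ⟨rfl, by abel⟩⟩
    rw [hpush4, ent_push_inj _ hkinj, push_phi_quad]
  rw [condMI, e1, e2, e3, e4, sCond_formula p q hp0 hq0 hp1 hq1, sDouble, sDouble]
  ring
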